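/- Let G be a finite simple graph, let z ≥ 0 be an integer, and let (C,F) be a z-antler in G. Then there exists F' ⊆ F such that (C,F') is a z-antler in G and the forest G[F'] has at most (|C|/2)·(z² + 2z − 1) connected components (trees). -/

import Mathlib

variable {V : Type*}

/-- The subgraph of `G` with edges restricted to the vertex set `S`
(kept on the same vertex type; vertices outside `S` become isolated).
Used to model the induced subgraph `G[S]` and vertex deletion `G - X = G[Xᶜ]`. -/
def graphRestrict (G : SimpleGraph V) (S : Set V) : SimpleGraph V where
  Adj u v := G.Adj u v ∧ u ∈ S ∧ v ∈ S
  symm := ⟨fun _ _ h => ⟨h.1.symm, h.2.2, h.2.1⟩⟩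
  loopless := ⟨fun _ h => G.irrefl h.1⟩

/-- `X` is a feedback vertex set of `G`: deleting `X` leaves an acyclic graph. -/
def IsFVS (G : SimpleGraph V) (X : Set V) : Prop :=
  (graphRestrict G Xᶜ).IsAcyclic

/-- The feedback vertex number of `G`: the minimum size of a feedback vertex set. -/
noncomputable def fvs (G : SimpleGraph V) : ℕ :=
  sInf {n | ∃ X : Set V, IsFVS G X ∧ X.ncard = n}

/-- `X` is a minimum feedback vertex set of `G`. -/
def IsMinFVS (G : SimpleGraph V) (X : Set V) : Prop :=
  IsFVS G X ∧ ∀ Y : Set V, IsFVS G Y → X.ncard ≤ Y.ncard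

/-- `(C, F)` is a feedback vertex cut in `G`: `C` and `F` are disjoint, `G[F]` is a
forest, and every tree of `G[F]` has at most one edge to `V(G) \ (C ∪ F)` (i.e. any two
edges from the same component of `G[F]` to the outside coincide). -/
def IsFVC (G : SimpleGraph V) (C F : Set V) : Prop :=
  Disjoint C F ∧ (graphRestrict G F).IsAcyclic ∧
    ∀ u₁ u₂ w₁ w₂ : V, u₁ ∈ F → u₂ ∈ F →
      (graphRestrict G F).Reachable u₁ u₂ →
      w₁ ∉ C ∪ F → w₂ ∉ C ∪ F → G.Adj u₁ w₁ → G.Adj u₂ w₂ →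
      u₁ = u₂ ∧ w₁ = w₂

/-- `(C, F)` is an antler in `G`: a feedback vertex cut with `|C| ≤ fvs(G[C ∪ F])`. -/
def IsAntler (G : SimpleGraph V) (C F : Set V) : Prop :=
  IsFVC G C F ∧ C.ncard ≤ fvs (graphRestrict G (C ∪ F))

/-- A graph `H` together with a vertex set `C` "has order `z`" if every connected
component `H'` of `H` satisfies `fvs(H') = |C ∩ V(H')| ≤ z`. -/
def HasCertOrder {W : Type*} (H : SimpleGraph W) (C : Set W) (z : ℕ) : Prop :=
  ∀ v : W,
    fvs (graphRestrict H {u | H.Reachable u v}) = (C ∩ {u | H.Reachable u v}).ncard ∧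
    (C ∩ {u | H.Reachable u v}).ncard ≤ z

/-- `H` is a `C`-certificate in `G`: a subgraph of `G` for which `C` is a minimum
feedback vertex set. -/
def IsCCertificate (G : SimpleGraph V) (C : Set V) (H : G.Subgraph) : Prop :=
  C ⊆ H.verts ∧ IsMinFVS H.coe {u : H.verts | (u : V) ∈ C}

/-- `H` is a `C`-certificate of order `z` in `G`. -/
def IsCCertificateOfOrder (G : SimpleGraph V) (C : Set V) (H : G.Subgraph) (z : ℕ) : Prop :=
  IsCCertificate G C H ∧ HasCertOrder H.coe {u : H.verts | (u : V) ∈ C} z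

/-- `(C, F)` is a `z`-antler in `G`: an antler such that `G[C ∪ F]` contains a
`C`-certificate of order `z`. -/
def IsZAntler (G : SimpleGraph V) (z : ℕ) (C F : Set V) : Prop :=
  IsAntler G C F ∧ ∃ H : G.Subgraph, H.verts ⊆ C ∪ F ∧ IsCCertificateOfOrder G C H z

/-- The function `f_r(x) = 2x³ + 3x² - x`. -/
def fr (x : ℕ) : ℕ := 2 * x ^ 3 + 3 * x ^ 2 - x

/-- A feedback vertex cut `(C, F)` is reducible if `|F| > f_r(|C|)`. -/
def IsReducibleFVC (G : SimpleGraph V) (C F : Set V) : Prop :=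
  IsFVC G C F ∧ fr C.ncard < F.ncard

/-- A feedback vertex cut `(C, F)` is simple if `|F| ≤ 2 f_r(|C|)` and either
`G[F]` is connected, or all trees of `G[F]` have a common neighbor `v` and there is a
single-tree feedback vertex cut `(C, F₂)` with `v ∈ F₂ \ F` and `F ⊆ F₂`. -/
def IsSimpleFVC (G : SimpleGraph V) (C F : Set V) : Prop :=
  IsFVC G C F ∧ F.ncard ≤ 2 * fr C.ncard ∧
    ((G.induce F).Connected ∨
      ∃ v : V,
        (∀ u ∈ F, ∃ u' ∈ F, (graphRestrict G F).Reachable u u' ∧ G.Adj u' v) ∧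
        ∃ F₂ : Set V, IsFVC G C F₂ ∧ (G.induce F₂).Connected ∧ v ∈ F₂ \ F ∧ F ⊆ F₂)

/-- `G` contains a `v`-flower of order `k`: `k` cycles whose vertex sets pairwise
intersect exactly in `{v}`. -/
def HasFlower (G : SimpleGraph V) (v : V) (k : ℕ) : Prop :=
  ∃ c : Fin k → G.Walk v v,
    (∀ i, (c i).IsCycle) ∧
    ∀ i j, i ≠ j → {x | x ∈ (c i).support} ∩ {x | x ∈ (c j).support} = {v}

/-- `G` contains `k` pairwise vertex-disjoint cycles. -/
def HasDisjointCycles (G : SimpleGraph V) (k : ℕ) : Prop :=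
  ∃ (b : Fin k → V) (c : ∀ i, G.Walk (b i) (b i)),
    (∀ i, (c i).IsCycle) ∧
    ∀ i j, i ≠ j → Disjoint {x | x ∈ (c i).support} {x | x ∈ (c j).support}

/-- `(C, F)` is a 1-antler in `G` (self-contained definition): `G[F]` is a forest,
every tree of `G[F]` has at most one edge to `V(G) \ (C ∪ F)`, and `G[C ∪ F]`
contains `|C|` pairwise vertex-disjoint cycles. -/
def IsOneAntler (G : SimpleGraph V) (C F : Set V) : Prop :=
  IsFVC G C F ∧ HasDisjointCycles (graphRestrict G (C ∪ F)) C.ncard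

/-- `C 1, F 1, …, C ℓ, F ℓ` is a `z`-antler-sequence for `G`: the sets are pairwise
disjoint and each `(C i, F i)` is a `z`-antler in `G` minus all earlier sets. -/
def IsAntlerSeq (G : SimpleGraph V) (z ℓ : ℕ) (C F : Fin ℓ → Set V) : Prop :=
  (∀ i j, i ≠ j → Disjoint (C i) (C j)) ∧
  (∀ i j, i ≠ j → Disjoint (F i) (F j)) ∧
  (∀ i j, Disjoint (C i) (F j)) ∧
  ∀ i, IsZAntler (graphRestrict G (⋃ j, ⋃ (_ : j < i), (C j ∪ F j))ᶜ) z (C i) (F i)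


/-!
Prune the certificate: while some tree `T` of the forest `K - C` can be deleted from the
certificate `K` without pushing `fvs K` below `|C|`, delete it. Afterwards every tree `T` is
essential: a minimum feedback vertex set `X` of `K - T` is smaller than `C` on the component `W`
of `T`, and a cycle of `K - X` leaves and re-enters `T` along two distinct edges `ap`, `bq` with
`p, q ∈ C \ X`. Label `T` by `{p, q}`. Apart from `T`, two trees with the same label that avoid
`X` (or a single one, when `p = q`) would close a cycle in the forest `K - T - X`; the remaining
trees with this label are disjoint and meet `X ∩ W`, where `|X ∩ W| < |C ∩ W| ≤ z`. Hence a
label carries at most `z` trees if `p = q` and `z + 1` otherwise. There are at most `|C|`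
diagonal labels and at most `|C| (z - 1) / 2` others, since `p` is only paired with the other
vertices of `C` in its component; so `2 · #trees ≤ |C| (z² + 2z - 1)`. Finally `F'` is the union
of the components of `G[F]` containing a tree: `(C, F')` is a `z`-antler certified by the pruned
`K`, and every component of `G[F']` contains a tree.
-/

open SimpleGraph Set

section graphRestrict

variable {G G' : SimpleGraph V} {S T : Set V}

@[simp]
lemma graphRestrict_adj {u v : V} :
    (graphRestrict G S).Adj u v ↔ G.Adj u v ∧ u ∈ S ∧ v ∈ S := Iff.rfl

lemma graphRestrict_le : graphRestrict G S ≤ G := fun _ _ h => h.1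

lemma graphRestrict_mono (hG : G ≤ G') (hST : S ⊆ T) :
    graphRestrict G S ≤ graphRestrict G' T :=
  fun _ _ h => ⟨hG h.1, hST h.2.1, hST h.2.2⟩

lemma graphRestrict_graphRestrict :
    graphRestrict (graphRestrict G S) T = graphRestrict G (S ∩ T) := by
  ext u v
  simp only [graphRestrict_adj, mem_inter_iff]
  tauto

lemma SimpleGraph.Walk.support_subset_of_adj {P : V → Prop} (hP : ∀ a b, G.Adj a b → P a) {x y : V}
    (w : G.Walk x y) (hy : P y) : ∀ u ∈ w.support, P u := by
  induction w with
  | nil => simpa using hy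
  | cons h _ ih =>
    simp only [Walk.support_cons, List.mem_cons, forall_eq_or_imp]
    exact ⟨hP _ _ h, ih hy⟩

lemma SimpleGraph.Walk.support_subset_graphRestrict {x y : V} (w : (graphRestrict G S).Walk x y)
    (hy : y ∈ S) : ∀ u ∈ w.support, u ∈ S :=
  w.support_subset_of_adj (fun _ _ (h : (graphRestrict G S).Adj _ _) => h.2.1) hy

end graphRestrict

section components

variable {L L' : SimpleGraph V} {A : Set V} {u v : V}

def reachSet (L : SimpleGraph V) (v : V) : Set V := {u | L.Reachable u v}

def IsCompClosed (L : SimpleGraph V) (A : Set V) : Prop := ∀ ⦃x⦄, x ∈ A → reachSet L x ⊆ A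

@[simp]
lemma mem_reachSet : u ∈ reachSet L v ↔ L.Reachable u v := Iff.rfl

lemma mem_reachSet_self (L : SimpleGraph V) (v : V) : v ∈ reachSet L v := Reachable.refl v

lemma reachSet_eq_of_mem (h : u ∈ reachSet L v) : reachSet L u = reachSet L v :=
  Set.ext fun _ => ⟨fun hx => hx.trans h, fun hx => hx.trans h.symm⟩

lemma reachSet_mono (h : L ≤ L') (v : V) : reachSet L v ⊆ reachSet L' v :=
  fun _ hu => hu.mono h

lemma reachSet_graphRestrict_subset {G : SimpleGraph V} {S : Set V} (hv : v ∈ S) :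
    reachSet (graphRestrict G S) v ⊆ S := fun _ ⟨w⟩ =>
  w.support_subset_graphRestrict hv _ w.start_mem_support

lemma isCompClosed_reachSet (L : SimpleGraph V) (v : V) : IsCompClosed L (reachSet L v) :=
  fun _ hx _ hu => hu.trans hx

lemma isCompClosed_biUnion_reachSet (L : SimpleGraph V) (Y : Set V) :
    IsCompClosed L (⋃ y ∈ Y, reachSet L y) := by
  intro x hx u hu
  simp only [mem_iUnion] at hx ⊢
  obtain ⟨y, hy, hxy⟩ := hx
  exact ⟨y, hy, hu.trans hxy⟩

lemma IsCompClosed.compl (hA : IsCompClosed L A) : IsCompClosed L Aᶜ :=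
  fun _ hx _ hu huA => hx (hA huA hu.symm)

lemma IsCompClosed.anti (h : L ≤ L') (hA : IsCompClosed L' A) : IsCompClosed L A :=
  fun _ hx => (reachSet_mono h _).trans (hA hx)

lemma IsCompClosed.graphRestrict_reachable (hA : IsCompClosed L A) (hu : u ∈ A)
    (h : L.Reachable u v) : (graphRestrict L A).Reachable u v := by
  obtain ⟨w⟩ := h
  induction w with
  | nil => rfl
  | cons hxy _ ih =>
    have hy := hA hu hxy.symm.reachable
    exact (Adj.reachable (G := graphRestrict L A) ⟨hxy, hu, hy⟩).trans (ih hy)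

end components

section fvs

variable {G G' : SimpleGraph V} {X C A : Set V}

lemma isFVS_univ (G : SimpleGraph V) : IsFVS G univ := by
  rw [IsFVS, compl_univ]
  exact isAcyclic_bot.anti fun _ _ h => h.2.1

lemma IsFVS.anti (h : G ≤ G') (hX : IsFVS G' X) : IsFVS G X :=
  IsAcyclic.anti (graphRestrict_mono h le_rfl) hX

lemma IsFVS.restrict (hX : IsFVS G X) (A : Set V) : IsFVS (graphRestrict G A) (X ∩ A) := by
  rw [IsFVS, graphRestrict_graphRestrict]
  exact IsAcyclic.anti (graphRestrict_mono le_rfl fun u hu hX => hu.2 ⟨hX, hu.1⟩) hX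

lemma isFVS_graphRestrict_compl_iff : IsFVS (graphRestrict G Aᶜ) X ↔ IsFVS G (A ∪ X) := by
  rw [IsFVS, IsFVS, graphRestrict_graphRestrict, compl_union]

lemma fvs_le_ncard (h : IsFVS G X) : fvs G ≤ X.ncard := Nat.sInf_le ⟨X, h, rfl⟩

lemma exists_isFVS_ncard_eq_fvs (G : SimpleGraph V) : ∃ X, IsFVS G X ∧ X.ncard = fvs G :=
  Nat.sInf_mem (s := {n | ∃ X : Set V, IsFVS G X ∧ X.ncard = n}) ⟨_, univ, isFVS_univ G, rfl⟩

lemma le_fvs {k : ℕ} (h : ∀ X, IsFVS G X → k ≤ X.ncard) : k ≤ fvs G := by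
  obtain ⟨X, hX, hX'⟩ := exists_isFVS_ncard_eq_fvs G
  exact hX' ▸ h X hX

lemma fvs_mono (h : G ≤ G') : fvs G ≤ fvs G' := by
  obtain ⟨X, hX, hX'⟩ := exists_isFVS_ncard_eq_fvs G'
  exact hX' ▸ fvs_le_ncard (hX.anti h)

lemma IsMinFVS.fvs_eq (hC : IsMinFVS G C) : fvs G = C.ncard :=
  le_antisymm (fvs_le_ncard hC.1) (le_fvs hC.2)

lemma exists_isCycle_of_not_isFVS (h : ¬IsFVS G X) :
    ∃ (v : V) (c : (graphRestrict G Xᶜ).Walk v v), c.IsCycle := by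
  simpa [IsFVS, IsAcyclic] using h

end fvs

section split

variable {L M : SimpleGraph V} {A X Y C : Set V}

lemma SimpleGraph.Walk.IsCycle.exists_isCycle_graphRestrict {v : V} {c : L.Walk v v}
    (hc : c.IsCycle) (hA : ∀ x ∈ c.support, x ∈ A) :
    ∃ c' : (graphRestrict L A).Walk v v, c'.IsCycle := by
  have he : ∀ e ∈ c.edges, e ∈ (graphRestrict L A).edgeSet := by
    intro e he
    induction e with
    | h a b => exact ⟨c.adj_of_mem_edges he, hA _ (c.fst_mem_support_of_mem_edges he),
        hA _ (c.snd_mem_support_of_mem_edges he)⟩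
  exact ⟨c.transfer _ he, hc.transfer he⟩

lemma isAcyclic_of_isCompClosed (hA : IsCompClosed L A) (h : (graphRestrict L A).IsAcyclic)
    (h' : (graphRestrict L Aᶜ).IsAcyclic) : L.IsAcyclic := by
  classical
  intro v c hc
  have hsupp : ∀ B, IsCompClosed L B → v ∈ B → ∀ x ∈ c.support, x ∈ B :=
    fun B hB hv x hx => hB hv ⟨c.dropUntil x hx⟩
  by_cases hv : v ∈ A
  · obtain ⟨c', hc'⟩ := hc.exists_isCycle_graphRestrict (hsupp A hA hv)
    exact h c' hc'
  · obtain ⟨c', hc'⟩ := hc.exists_isCycle_graphRestrict (hsupp Aᶜ hA.compl hv)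
    exact h' c' hc'

lemma IsFVS.union_of_isCompClosed (hA : IsCompClosed M A) (hX : IsFVS (graphRestrict M A) X)
    (hY : IsFVS (graphRestrict M Aᶜ) Y) : IsFVS M (X ∪ Y) := by
  rw [IsFVS, graphRestrict_graphRestrict] at hX hY
  refine isAcyclic_of_isCompClosed (A := A) (hA.anti graphRestrict_le) ?_ ?_ <;>
    rw [graphRestrict_graphRestrict]
  · refine hX.anti (graphRestrict_mono le_rfl ?_)
    exact fun x hx => ⟨hx.2, fun h => hx.1 (Or.inl h)⟩
  · refine hY.anti (graphRestrict_mono le_rfl ?_)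
    exact fun x hx => ⟨hx.2, fun h => hx.1 (Or.inr h)⟩

lemma IsMinFVS.fvs_graphRestrict [Finite V] (hC : IsMinFVS M C) (hA : IsCompClosed M A) :
    fvs (graphRestrict M A) = (C ∩ A).ncard := by
  refine le_antisymm (fvs_le_ncard (hC.1.restrict A)) (le_fvs fun X hX => ?_)
  have h1 := hC.2 _ (hX.union_of_isCompClosed hA (hC.1.restrict Aᶜ))
  have h2 := ncard_union_le X (C ∩ Aᶜ)
  have h3 := ncard_inter_add_ncard_sdiff_eq_ncard C A (toFinite C)
  rw [sdiff_eq] at h3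
  omega

end split

section spanningCoe

variable {s : Set V} {L : SimpleGraph s} {C X : Set V}

lemma mem_of_spanningCoe_adj {u v : V} (h : L.spanningCoe.Adj u v) : u ∈ s := by
  obtain ⟨a, -, -, rfl, -⟩ := (map_adj _ _ _ _).1 h
  exact a.2

lemma graphRestrict_spanningCoe (X : Set V) :
    graphRestrict L.spanningCoe X = (graphRestrict L (Subtype.val ⁻¹' X)).spanningCoe := by
  ext u v
  simp only [graphRestrict_adj, map_adj, mem_preimage]
  constructor
  · rintro ⟨⟨a, b, h, rfl, rfl⟩, hu, hv⟩
    exact ⟨a, b, ⟨h, hu, hv⟩, rfl, rfl⟩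
  · rintro ⟨a, b, ⟨h, hu, hv⟩, rfl, rfl⟩
    exact ⟨⟨a, b, h, rfl, rfl⟩, hu, hv⟩

lemma isAcyclic_spanningCoe_iff : L.spanningCoe.IsAcyclic ↔ L.IsAcyclic := by
  refine ⟨IsAcyclic.of_map _, fun h v c hc => ?_⟩
  have hs := c.support_subset_of_adj (fun _ _ => mem_of_spanningCoe_adj)
    (mem_of_spanningCoe_adj (c.adj_snd hc.not_nil))
  rw [← induce_spanningCoe (G := L)] at h
  refine h (c.induce s hs) ?_
  rwa [← Walk.isCycle_map_iff_of_injective (f := (Embedding.induce (G := L.spanningCoe) s).toHom)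
    Subtype.val_injective, Walk.map_induce]

lemma isFVS_spanningCoe_iff : IsFVS L.spanningCoe X ↔ IsFVS L (Subtype.val ⁻¹' X) := by
  rw [IsFVS, IsFVS, graphRestrict_spanningCoe, isAcyclic_spanningCoe_iff, preimage_compl]

lemma reachable_spanningCoe_iff {a b : s} : L.spanningCoe.Reachable a b ↔ L.Reachable a b := by
  refine ⟨fun ⟨w⟩ => ?_, fun h => h.map (Embedding.map _ L).toHom⟩
  have hs := w.support_subset_of_adj (fun _ _ => mem_of_spanningCoe_adj) b.2
  have := (w.induce s hs).reachable
  rwa [induce_spanningCoe] at this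

lemma isMinFVS_spanningCoe_iff [Finite V] (hC : C ⊆ s) :
    IsMinFVS L.spanningCoe C ↔ IsMinFVS L (Subtype.val ⁻¹' C) := by
  have hCcard : (Subtype.val ⁻¹' C : Set s).ncard = C.ncard :=
    ncard_preimage_of_injective_subset_range Subtype.val_injective (by rwa [Subtype.range_coe])
  refine ⟨fun h => ⟨isFVS_spanningCoe_iff.1 h.1, fun Y hY => ?_⟩,
    fun h => ⟨isFVS_spanningCoe_iff.2 h.1, fun X hX => ?_⟩⟩
  · have := h.2 _ (isFVS_spanningCoe_iff.2 (by rwa [preimage_image_eq _ Subtype.val_injective]))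
    rwa [ncard_image_of_injective _ Subtype.val_injective, ← hCcard] at this
  · calc C.ncard = (Subtype.val ⁻¹' C : Set s).ncard := hCcard.symm
      _ ≤ (Subtype.val ⁻¹' X : Set s).ncard := h.2 _ (isFVS_spanningCoe_iff.1 hX)
      _ = (Subtype.val '' (Subtype.val ⁻¹' X : Set s)).ncard :=
        (ncard_image_of_injective _ Subtype.val_injective).symm
      _ ≤ X.ncard := ncard_le_ncard (image_preimage_subset _ _)

end spanningCoe

lemma SimpleGraph.IsAcyclic.eq_of_adj_of_reachable {L : SimpleGraph V} (hL : L.IsAcyclic)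
    {S : Set V} {a b p : V} (ha : a ∈ S) (hp : p ∉ S) (hab : (graphRestrict L S).Reachable a b)
    (hap : L.Adj a p) (hbp : L.Adj b p) : a = b := by
  classical
  by_contra hne
  have hb : b ∈ S := reachSet_graphRestrict_subset ha hab.symm
  obtain ⟨w⟩ := hab
  have hpw := hL.mem_support_of_ne_mem_support_of_adj_of_isPath
    ((w.toPath.2).mapLe graphRestrict_le) (Path.singleton hap).2 hbp
    (by simp [Ne.symm hne, show b ≠ p from fun h => hp (h ▸ hb)])
  simp only [Walk.support_map, Hom.coe_ofLE, List.map_id_fun, id_eq] at hpw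
  exact hp (w.toPath.1.support_subset_graphRestrict hb _ hpw)

lemma SimpleGraph.Walk.exists_darts_leaving_entering {G : SimpleGraph V} {v : V}
    (c : G.Walk v v) {S : Set V} {x y : V} (hx : x ∈ c.support) (hxS : x ∈ S)
    (hy : y ∈ c.support) (hyS : y ∉ S) :
    ∃ d ∈ c.darts, ∃ d' ∈ c.darts, d.fst ∈ S ∧ d.snd ∉ S ∧ d'.fst ∉ S ∧ d'.snd ∈ S := by
  classical
  by_cases hv : v ∈ S
  · obtain ⟨d, hd, h1, h2⟩ := (c.takeUntil y hy).exists_boundary_dart S hv hyS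
    obtain ⟨d', hd', h1', h2'⟩ := (c.dropUntil y hy).exists_boundary_dart Sᶜ hyS (by simpa)
    exact ⟨d, c.darts_takeUntil_subset_darts hy hd, d', c.darts_dropUntil_subset_darts hy hd',
      h1, h2, h1', by simpa using h2'⟩
  · obtain ⟨d', hd', h1', h2'⟩ := (c.takeUntil x hx).exists_boundary_dart Sᶜ hv (by simpa)
    obtain ⟨d, hd, h1, h2⟩ := (c.dropUntil x hx).exists_boundary_dart S hxS hv
    exact ⟨d, c.darts_dropUntil_subset_darts hx hd, d', c.darts_takeUntil_subset_darts hx hd',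
      h1, h2, h1', by simpa using h2'⟩

lemma ncard_le_ncard_of_pairwiseDisjoint {α : Type*} {𝒮 : Set (Set α)} {X : Set α}
    (hX : X.Finite) (h𝒮 : 𝒮.PairwiseDisjoint id) (hmeet : ∀ S ∈ 𝒮, (S ∩ X).Nonempty) :
    𝒮.ncard ≤ X.ncard := by
  have : Finite X := hX
  rw [← Nat.card_coe_set_eq, ← Nat.card_coe_set_eq]
  refine Nat.card_le_card_of_injective
    (fun S => ⟨(hmeet S S.2).some, (hmeet S S.2).some_mem.2⟩) fun S S' h => ?_
  by_contra hne
  have hS' := (hmeet S' S'.2).some_mem.1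
  rw [← show (hmeet S S.2).some = (hmeet S' S'.2).some from congrArg Subtype.val h] at hS'
  exact Set.disjoint_left.1 (h𝒮 S.2 S'.2 (Subtype.coe_ne_coe.2 hne)) (hmeet S S.2).some_mem.1 hS'

open Finset in
lemma two_mul_card_add_card_le_of_degree_lt {α : Type*} [DecidableEq α] {E : Finset (Sym2 α)}
    {S : Finset α} {d : ℕ} (hE : ∀ e ∈ E, ¬e.IsDiag ∧ ∀ x ∈ e, x ∈ S)
    (hd : ∀ x ∈ S, #{e ∈ E | x ∈ e} < d) : 2 * #E + #S ≤ d * #S := by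
  have h := card_mul_le_card_mul (fun e x => x ∈ e) (s := E) (t := S) (m := 2) (n := d - 1)
    (fun e he => ?_) (fun x hx => ?_)
  · have hS : #S ≤ d * #S := by
      rcases S.eq_empty_or_nonempty with rfl | ⟨x, hx⟩
      · simp
      · exact Nat.le_mul_of_pos_left _ (Nat.zero_lt_of_lt (hd x hx))
    rw [Nat.mul_sub_one, Nat.mul_comm #S] at h
    omega
  · induction e using Sym2.ind with
    | h x y =>
      obtain ⟨hxy, hxyS⟩ := hE _ he
      have hsub : ({x, y} : Finset α) ⊆ bipartiteAbove (fun e x => x ∈ e) S s(x, y) := by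
        intro u hu
        simp only [Finset.mem_insert, Finset.mem_singleton] at hu
        rcases hu with rfl | rfl <;> simp [mem_bipartiteAbove, hxyS]
      exact (card_pair (by simpa using hxy)).symm.le.trans (card_le_card hsub)
  · have := hd x hx
    simp only [bipartiteBelow]
    omega

section certificate

variable {G : SimpleGraph V} {C T : Set V} {z : ℕ} {K : G.Subgraph}

structure IsSpanningCert (C : Set V) (z : ℕ) (K : G.Subgraph) : Prop where
  subset_verts : C ⊆ K.verts
  isMinFVS : IsMinFVS K.spanningCoe C
  ncard_inter_le : ∀ p ∈ C, (C ∩ reachSet K.spanningCoe p).ncard ≤ z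

lemma ncard_inter_reachable_coe_eq (hC : C ⊆ K.verts) (v : K.verts) :
    ({u : K.verts | (u : V) ∈ C} ∩ {u | K.coe.Reachable u v}).ncard =
      (C ∩ reachSet K.spanningCoe v).ncard := by
  have : {u : K.verts | (u : V) ∈ C} ∩ {u | K.coe.Reachable u v} =
      Subtype.val ⁻¹' (C ∩ reachSet K.spanningCoe v) := by
    ext u
    simp [← Subgraph.spanningCoe_coe, reachable_spanningCoe_iff]
  rw [this, ncard_preimage_of_injective_subset_range Subtype.val_injective]
  rw [Subtype.range_coe]
  exact inter_subset_left.trans hC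

lemma isSpanningCert_iff [Finite V] : IsSpanningCert C z K ↔ IsCCertificateOfOrder G C K z := by
  have hsc : K.coe.spanningCoe = K.spanningCoe := Subgraph.spanningCoe_coe K
  constructor
  · rintro ⟨hC, hmin, hz⟩
    have hmin' : IsMinFVS K.coe (Subtype.val ⁻¹' C) :=
      (isMinFVS_spanningCoe_iff hC).1 (hsc ▸ hmin)
    refine ⟨⟨hC, hmin'⟩, fun v => ⟨hmin'.fvs_graphRestrict (isCompClosed_reachSet _ v), ?_⟩⟩
    rw [ncard_inter_reachable_coe_eq hC]
    obtain he | ⟨p, hp, hpv⟩ := (C ∩ reachSet K.spanningCoe v).eq_empty_or_nonempty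
    · simp [he]
    · rw [← reachSet_eq_of_mem hpv]
      exact hz p hp
  · rintro ⟨⟨hC, hmin⟩, hz⟩
    refine ⟨hC, hsc ▸ (isMinFVS_spanningCoe_iff hC).2 hmin, fun p hp => ?_⟩
    have := (hz ⟨p, hC hp⟩).2
    rwa [ncard_inter_reachable_coe_eq hC] at this

lemma IsSpanningCert.fvs_eq (hK : IsSpanningCert C z K) : fvs K.spanningCoe = C.ncard :=
  hK.isMinFVS.fvs_eq

def treesOf (K : G.Subgraph) (C : Set V) : Set (Set V) :=
  reachSet (graphRestrict K.spanningCoe Cᶜ) '' (K.verts \ C)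

lemma subset_of_mem_treesOf (hT : T ∈ treesOf K C) : T ⊆ K.verts \ C := by
  obtain ⟨y, hy, rfl⟩ := hT
  rintro x ⟨w⟩
  exact w.support_subset_of_adj (P := (· ∈ K.verts \ C))
    (fun _ _ (h : (graphRestrict _ _).Adj _ _) => ⟨K.edge_vert h.1, h.2.1⟩) hy _
    w.start_mem_support

lemma notMem_of_mem_treesOf {c : V} (hT : T ∈ treesOf K C) (hc : c ∈ C) : c ∉ T :=
  fun h => (subset_of_mem_treesOf hT h).2 hc

lemma nonempty_of_mem_treesOf (hT : T ∈ treesOf K C) : T.Nonempty := by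
  obtain ⟨y, -, rfl⟩ := hT
  exact ⟨y, mem_reachSet_self _ y⟩

lemma treesOf_pairwiseDisjoint : (treesOf K C).PairwiseDisjoint id := by
  rintro _ ⟨y, -, rfl⟩ _ ⟨y', -, rfl⟩ hne
  refine Set.disjoint_left.2 fun x hx hx' => hne ?_
  exact (reachSet_eq_of_mem hx).symm.trans (reachSet_eq_of_mem hx')

lemma mem_of_adj_of_mem_treesOf {x w : V} (hT : T ∈ treesOf K C) (hx : x ∈ T)
    (hxw : K.Adj x w) (hw : w ∉ T) : w ∈ C := by
  by_contra hwC
  have hxC : x ∉ C := (subset_of_mem_treesOf hT hx).2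
  obtain ⟨y, -, rfl⟩ := hT
  exact hw ((Adj.reachable (G := graphRestrict K.spanningCoe Cᶜ) ⟨hxw.symm, hwC, hxC⟩).trans hx)

lemma graphRestrict_reachable_of_mem_treesOf {a b : V} (hT : T ∈ treesOf K C) (ha : a ∈ T)
    (hb : b ∈ T) : (graphRestrict K.spanningCoe T).Reachable a b := by
  obtain ⟨y, -, rfl⟩ := hT
  refine ((isCompClosed_reachSet _ y).graphRestrict_reachable ha (ha.trans hb.symm)).mono
    (graphRestrict_mono graphRestrict_le le_rfl)

lemma subset_reachSet_of_mem_treesOf {y : V} (hT : T ∈ treesOf K C) (hy : y ∈ T) :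
    T ⊆ reachSet K.spanningCoe y := fun _ hx =>
  (graphRestrict_reachable_of_mem_treesOf hT hx hy).mono graphRestrict_le

end certificate

section pruning

variable {G : SimpleGraph V} {C T : Set V} {z : ℕ} {K : G.Subgraph}

def IsPruned (K : G.Subgraph) (C : Set V) : Prop :=
  ∀ T ∈ treesOf K C, fvs (graphRestrict K.spanningCoe Tᶜ) < C.ncard

lemma spanningCoe_deleteVerts (K : G.Subgraph) (T : Set V) :
    (K.deleteVerts T).spanningCoe = graphRestrict K.spanningCoe Tᶜ := by
  ext u v
  simp only [Subgraph.spanningCoe_adj, Subgraph.deleteVerts_adj, graphRestrict_adj,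
    mem_compl_iff]
  exact ⟨fun ⟨_, hu, _, hv, h⟩ => ⟨h, hu, hv⟩, fun ⟨h, hu, hv⟩ => ⟨h.fst_mem, hu, h.snd_mem, hv, h⟩⟩

lemma IsSpanningCert.deleteVerts [Finite V] (hK : IsSpanningCert C z K) (hTC : Disjoint T C)
    (hfvs : C.ncard ≤ fvs (graphRestrict K.spanningCoe Tᶜ)) :
    IsSpanningCert C z (K.deleteVerts T) := by
  have hle : (K.deleteVerts T).spanningCoe ≤ K.spanningCoe :=
    spanningCoe_deleteVerts K T ▸ graphRestrict_le
  refine ⟨fun c hc => ⟨hK.subset_verts hc, Set.disjoint_right.1 hTC hc⟩,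
    ⟨hK.isMinFVS.1.anti hle, fun X hX => ?_⟩, fun p hp => ?_⟩
  · rw [spanningCoe_deleteVerts] at hX
    exact hfvs.trans (fvs_le_ncard hX)
  · exact (ncard_le_ncard (inter_subset_inter_right _ (reachSet_mono hle p))).trans
      (hK.ncard_inter_le p hp)

lemma IsSpanningCert.exists_isPruned [Finite V] (hK : IsSpanningCert C z K) :
    ∃ K' : G.Subgraph, K'.verts ⊆ K.verts ∧ IsSpanningCert C z K' ∧ IsPruned K' C := by
  induction h : K.verts.ncard using Nat.strong_induction_on generalizing K with
  | _ n ih =>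
  by_cases hpr : IsPruned K C
  · exact ⟨K, subset_rfl, hK, hpr⟩
  simp only [IsPruned, not_forall, not_lt] at hpr
  obtain ⟨T, hT, hfvs⟩ := hpr
  have hsub := subset_of_mem_treesOf hT
  obtain ⟨y, hy⟩ := nonempty_of_mem_treesOf hT
  have hlt : (K.deleteVerts T).verts.ncard < n :=
    h ▸ ncard_lt_ncard ⟨sdiff_subset, fun h' => (h' (hsub hy).1).2 hy⟩
  obtain ⟨K', hK'K, hK', hpr'⟩ :=
    ih _ hlt (hK.deleteVerts (disjoint_sdiff_left.mono_left hsub) hfvs) rfl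
  exact ⟨K', hK'K.trans sdiff_subset, hK', hpr'⟩

end pruning

section anchors

variable {G : SimpleGraph V} {C T S S' X Y : Set V} {z : ℕ} {K : G.Subgraph}

lemma IsSpanningCert.exists_isFVS_ncard_inter_lt [Finite V] (hK : IsSpanningCert C z K)
    (hT : T ∈ treesOf K C) (hfvs : fvs (graphRestrict K.spanningCoe Tᶜ) < C.ncard) :
    ∃ X, IsFVS (graphRestrict K.spanningCoe Tᶜ) X ∧ X.ncard < C.ncard ∧
      ∀ y ∈ T, (X ∩ reachSet K.spanningCoe y).ncard < (C ∩ reachSet K.spanningCoe y).ncard := by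
  obtain ⟨X, hX, hXc⟩ := exists_isFVS_ncard_eq_fvs (graphRestrict K.spanningCoe Tᶜ)
  refine ⟨X, hX, hXc ▸ hfvs, fun y hy => ?_⟩
  set W := reachSet K.spanningCoe y
  have hTW : T ⊆ W := subset_reachSet_of_mem_treesOf hT hy
  -- outside the component `W`, `X` is a feedback vertex set of `K` itself
  have hout : (C ∩ Wᶜ).ncard ≤ (X ∩ Wᶜ).ncard := by
    rw [← hK.isMinFVS.fvs_graphRestrict (isCompClosed_reachSet _ y).compl]
    have := hX.restrict Wᶜ
    rw [graphRestrict_graphRestrict, inter_eq_right.2 (compl_subset_compl.2 hTW)] at this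
    exact fvs_le_ncard this
  have hX' := ncard_inter_add_ncard_sdiff_eq_ncard X W (toFinite X)
  have hC' := ncard_inter_add_ncard_sdiff_eq_ncard C W (toFinite C)
  rw [Set.sdiff_eq] at hX' hC'
  omega

lemma IsSpanningCert.exists_boundary_edges [Finite V] (hK : IsSpanningCert C z K)
    (hT : T ∈ treesOf K C) (hX : IsFVS (graphRestrict K.spanningCoe Tᶜ) X)
    (hXC : X.ncard < C.ncard) :
    ∃ a p b q, a ∈ T ∧ b ∈ T ∧ p ∈ C \ X ∧ q ∈ C \ X ∧ K.Adj a p ∧ K.Adj b q ∧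
      s(a, p) ≠ s(b, q) := by
  have hTC : T ⊆ Cᶜ := fun x hx => (subset_of_mem_treesOf hT hx).2
  obtain ⟨v, c, hc⟩ := exists_isCycle_of_not_isFVS fun h => (fvs_le_ncard h).not_gt
    (hK.fvs_eq ▸ hXC)
  have hin : ∃ x ∈ c.support, x ∈ T := by
    by_contra! hout
    obtain ⟨c', hc'⟩ := hc.exists_isCycle_graphRestrict (A := Tᶜ) hout
    have hle : graphRestrict (graphRestrict K.spanningCoe Xᶜ) Tᶜ ≤
        graphRestrict K.spanningCoe (T ∪ X)ᶜ := by
      rw [graphRestrict_graphRestrict, compl_union, inter_comm]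
    exact isFVS_graphRestrict_compl_iff.1 hX _ (hc'.mapLe hle)
  have hout : ∃ y ∈ c.support, y ∉ T := by
    by_contra! hin
    obtain ⟨c', hc'⟩ := hc.exists_isCycle_graphRestrict hin
    have hle : graphRestrict (graphRestrict K.spanningCoe Xᶜ) T ≤
        graphRestrict K.spanningCoe Cᶜ := by
      rw [graphRestrict_graphRestrict]
      exact graphRestrict_mono le_rfl fun x hx => hTC hx.2
    exact hK.isMinFVS.1 _ (hc'.mapLe hle)
  obtain ⟨x, hx, hxT⟩ := hin
  obtain ⟨y, hy, hyT⟩ := hout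
  obtain ⟨d, hd, d', hd', h1, h2, h1', h2'⟩ := c.exists_darts_leaving_entering hx hxT hy hyT
  refine ⟨d.fst, d.snd, d'.snd, d'.fst, h1, h2', ⟨?_, d.adj.2.2⟩, ⟨?_, d'.adj.2.1⟩, d.adj.1,
    d'.adj.1.symm, fun he => ?_⟩
  · exact mem_of_adj_of_mem_treesOf hT h1 d.adj.1 h2
  · exact mem_of_adj_of_mem_treesOf hT h2' d'.adj.1.symm h1'
  -- two darts of a cycle with the same edge coincide
  have hdd' : d = d' := List.inj_on_of_nodup_map hc.edges_nodup hd hd'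
    (by rw [Dart.edge, Dart.edge, he, Sym2.eq_swap])
  exact h1' (hdd' ▸ h1)

lemma subset_reachSet_of_adj {u c : V} (hS : S ∈ treesOf K C) (hu : u ∈ S) (huc : K.Adj u c) :
    S ⊆ reachSet K.spanningCoe c := by
  rw [← reachSet_eq_of_mem (Adj.reachable (G := K.spanningCoe) huc)]
  exact subset_reachSet_of_mem_treesOf hS hu

structure IsAnchor (K : G.Subgraph) (C T X : Set V) (a p b q : V) : Prop where
  isFVS : IsFVS (graphRestrict K.spanningCoe Tᶜ) X
  ncard_inter_lt :
    (X ∩ reachSet K.spanningCoe p).ncard < (C ∩ reachSet K.spanningCoe p).ncard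
  left_mem : a ∈ T
  right_mem : b ∈ T
  left_mem_sdiff : p ∈ C \ X
  right_mem_sdiff : q ∈ C \ X
  adj_left : K.Adj a p
  adj_right : K.Adj b q
  ne : s(a, p) ≠ s(b, q)

lemma IsSpanningCert.exists_isAnchor [Finite V] (hK : IsSpanningCert C z K)
    (hT : T ∈ treesOf K C) (hfvs : fvs (graphRestrict K.spanningCoe Tᶜ) < C.ncard) :
    ∃ X a p b q, IsAnchor K C T X a p b q := by
  obtain ⟨X, hX, hXC, hW⟩ := hK.exists_isFVS_ncard_inter_lt hT hfvs
  obtain ⟨a, p, b, q, ha, hb, hp, hq, hap, hbq, hne⟩ := hK.exists_boundary_edges hT hX hXC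
  refine ⟨X, a, p, b, q, hX, ?_, ha, hb, hp, hq, hap, hbq, hne⟩
  rw [← reachSet_eq_of_mem (Adj.reachable (G := K.spanningCoe) hap)]
  exact hW a ha

lemma IsAnchor.mem_reachSet {a p b q : V} (h : IsAnchor K C T X a p b q)
    (hT : T ∈ treesOf K C) : q ∈ reachSet K.spanningCoe p :=
  (Adj.reachable (G := K.spanningCoe) h.adj_right).symm.trans
    (subset_reachSet_of_adj hT h.left_mem h.adj_left h.right_mem)

lemma reachable_of_mem_treesOf_of_disjoint {U : Set V} (hS : S ∈ treesOf K C) (hSU : S ⊆ U)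
    (hSY : Disjoint S Y) {u v : V} (hu : u ∈ S) (hv : v ∈ S) :
    (graphRestrict (graphRestrict K.spanningCoe Yᶜ) U).Reachable u v := by
  refine (graphRestrict_reachable_of_mem_treesOf hS hu hv).mono ?_
  rw [graphRestrict_graphRestrict]
  exact graphRestrict_mono le_rfl fun x hx => ⟨Set.disjoint_left.1 hSY hx, hSU hx⟩

lemma eq_of_adj_of_isFVS (hT : T ∈ treesOf K C) (hY : IsFVS (graphRestrict K.spanningCoe Tᶜ) Y)
    (hS : S ∈ treesOf K C) (hSY : Disjoint S (T ∪ Y)) {c u v : V} (hc : c ∈ C \ Y)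
    (hu : u ∈ S) (hv : v ∈ S) (huc : K.Adj u c) (hvc : K.Adj v c) : u = v := by
  have hcTY : c ∉ T ∪ Y := fun h => h.elim (notMem_of_mem_treesOf hT hc.1) hc.2
  exact (isFVS_graphRestrict_compl_iff.1 hY).eq_of_adj_of_reachable hu
    (notMem_of_mem_treesOf hS hc.1)
    (reachable_of_mem_treesOf_of_disjoint hS subset_rfl hSY hu hv)
    ⟨huc, Set.disjoint_left.1 hSY hu, hcTY⟩ ⟨hvc, Set.disjoint_left.1 hSY hv, hcTY⟩

lemma eq_of_adj_adj_of_isFVS (hT : T ∈ treesOf K C)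
    (hY : IsFVS (graphRestrict K.spanningCoe Tᶜ) Y) (hS : S ∈ treesOf K C)
    (hS' : S' ∈ treesOf K C) (hSY : Disjoint S (T ∪ Y)) (hS'Y : Disjoint S' (T ∪ Y))
    {c c' : V} (hc : c ∈ C \ Y) (hc' : c' ∈ C \ Y) (hcc' : c ≠ c')
    (hSc : ∃ u ∈ S, K.Adj u c) (hSc' : ∃ v ∈ S, K.Adj v c')
    (hS'c : ∃ u ∈ S', K.Adj u c) (hS'c' : ∃ v ∈ S', K.Adj v c') : S = S' := by
  obtain ⟨u, hu, huc⟩ := hSc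
  obtain ⟨v, hv, hvc'⟩ := hSc'
  obtain ⟨u', hu', hu'c⟩ := hS'c
  obtain ⟨v', hv', hv'c'⟩ := hS'c'
  by_contra hne
  have hnot : ∀ {c}, c ∈ C \ Y → c ∉ T ∪ Y := fun hc h =>
    h.elim (notMem_of_mem_treesOf hT hc.1) hc.2
  set L := graphRestrict K.spanningCoe (T ∪ Y)ᶜ
  -- `S ∪ S' ∪ {c'}` is connected in the forest `L`, so it has only one edge to `c`
  set U := S ∪ S' ∪ {c'}
  have hvc'L : (graphRestrict L U).Adj v c' :=
    ⟨⟨hvc', Set.disjoint_left.1 hSY hv, hnot hc'⟩, .inl (.inl hv), .inr rfl⟩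
  have hc'v'L : (graphRestrict L U).Adj c' v' :=
    ⟨⟨hv'c'.symm, hnot hc', Set.disjoint_left.1 hS'Y hv'⟩, .inr rfl, .inl (.inr hv')⟩
  have hreach : (graphRestrict L U).Reachable u u' :=
    ((reachable_of_mem_treesOf_of_disjoint hS (fun x hx => .inl (.inl hx)) hSY hu hv).trans
      (hvc'L.reachable.trans hc'v'L.reachable)).trans
      (reachable_of_mem_treesOf_of_disjoint hS' (fun x hx => .inl (.inr hx)) hS'Y hv' hu')
  have hcU : c ∉ U := by
    rintro ((h | h) | h)
    exacts [notMem_of_mem_treesOf hS hc.1 h, notMem_of_mem_treesOf hS' hc.1 h, hcc' h]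
  have huu' := (isFVS_graphRestrict_compl_iff.1 hY).eq_of_adj_of_reachable (.inl (.inl hu)) hcU
    hreach ⟨huc, Set.disjoint_left.1 hSY hu, hnot hc⟩ ⟨hu'c, Set.disjoint_left.1 hS'Y hu', hnot hc⟩
  exact Set.disjoint_left.1 (treesOf_pairwiseDisjoint hS hS' hne) hu (huu' ▸ hu')

end anchors

section fibres

variable [Finite V] {G : SimpleGraph V} {C : Set V} {z : ℕ} {K : G.Subgraph}

lemma IsSpanningCert.ncard_le_of_ncard_disjoint_le (hK : IsSpanningCert C z K)
    {𝒟 : Set (Set V)} (h𝒟 : 𝒟 ⊆ treesOf K C) {c : V} (hc : c ∈ C)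
    (h𝒟c : ∀ S ∈ 𝒟, S ⊆ reachSet K.spanningCoe c) {Y : Set V}
    (hY : (Y ∩ reachSet K.spanningCoe c).ncard < (C ∩ reachSet K.spanningCoe c).ncard) {k : ℕ}
    (hk : {S ∈ 𝒟 | Disjoint S Y}.ncard ≤ k + 1) : 𝒟.ncard ≤ z + k := by
  have hmeet : {S ∈ 𝒟 | ¬Disjoint S Y}.ncard ≤ (Y ∩ reachSet K.spanningCoe c).ncard := by
    refine ncard_le_ncard_of_pairwiseDisjoint (toFinite _)
      (treesOf_pairwiseDisjoint.subset fun S hS => h𝒟 hS.1) fun S hS => ?_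
    obtain ⟨x, hxS, hxY⟩ := not_disjoint_iff_nonempty_inter.1 hS.2
    exact ⟨x, hxS, hxY, h𝒟c S hS.1 hxS⟩
  have hsplit : 𝒟.ncard ≤ {S ∈ 𝒟 | ¬Disjoint S Y}.ncard + {S ∈ 𝒟 | Disjoint S Y}.ncard := by
    refine (ncard_le_ncard fun S hS => ?_).trans (ncard_union_le _ _)
    by_cases h : Disjoint S Y
    exacts [.inr ⟨hS, h⟩, .inl ⟨hS, h⟩]
  have := hK.ncard_inter_le c hc
  omega

variable {X : Set V → Set V} {a p b q : Set V → V}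

lemma IsSpanningCert.ncard_diag_fibre_le (hK : IsSpanningCert C z K)
    (hA : ∀ T ∈ treesOf K C, IsAnchor K C T (X T) (a T) (p T) (b T) (q T)) (c : V) :
    {T ∈ treesOf K C | p T = c ∧ q T = c}.ncard ≤ z := by
  obtain h | ⟨T₀, hT₀, rfl, hq₀⟩ := {T ∈ treesOf K C | p T = c ∧ q T = c}.eq_empty_or_nonempty
  · simp [h]
  have hA₀ := hA T₀ hT₀
  refine hK.ncard_le_of_ncard_disjoint_le (k := 0) (fun S hS => hS.1) hA₀.left_mem_sdiff.1
    (fun S (hS : S ∈ {T ∈ treesOf K C | p T = p T₀ ∧ q T = p T₀}) =>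
      subset_reachSet_of_adj hS.1 (hA S hS.1).left_mem (hS.2.1 ▸ (hA S hS.1).adj_left))
    hA₀.ncard_inter_lt ((ncard_le_ncard (t := {T₀}) ?_).trans (ncard_singleton T₀).le)
  -- a tree other than `T₀` with two edges to `p T₀` must meet `X T₀`
  rintro S ⟨⟨hS, hpS, hqS⟩, hSX⟩
  by_contra hne
  have hA' := hA S hS
  have hab := eq_of_adj_of_isFVS hT₀ hA₀.isFVS hS
    ((treesOf_pairwiseDisjoint hS hT₀ hne).union_right hSX) hA₀.left_mem_sdiff hA'.left_mem
    hA'.right_mem (hpS ▸ hA'.adj_left) (hqS ▸ hA'.adj_right)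
  exact hA'.ne (by rw [hab, hpS, hqS])

lemma IsSpanningCert.ncard_offDiag_fibre_le (hK : IsSpanningCert C z K)
    (hA : ∀ T ∈ treesOf K C, IsAnchor K C T (X T) (a T) (p T) (b T) (q T)) (e : Sym2 V)
    (he : ¬e.IsDiag) : {T ∈ treesOf K C | s(p T, q T) = e}.ncard ≤ z + 1 := by
  obtain h | ⟨T₀, hT₀, rfl⟩ := {T ∈ treesOf K C | s(p T, q T) = e}.eq_empty_or_nonempty
  · simp [h]
  have hA₀ := hA T₀ hT₀
  have hadj : ∀ S ∈ {T ∈ treesOf K C | s(p T, q T) = s(p T₀, q T₀)},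
      (∃ u ∈ S, K.Adj u (p T₀)) ∧ ∃ v ∈ S, K.Adj v (q T₀) := by
    rintro S ⟨hS, hSe⟩
    have hA' := hA S hS
    rcases Sym2.eq_iff.1 hSe with ⟨hp, hq⟩ | ⟨hp, hq⟩
    · exact ⟨⟨_, hA'.left_mem, hp ▸ hA'.adj_left⟩, ⟨_, hA'.right_mem, hq ▸ hA'.adj_right⟩⟩
    · exact ⟨⟨_, hA'.right_mem, hq ▸ hA'.adj_right⟩, ⟨_, hA'.left_mem, hp ▸ hA'.adj_left⟩⟩
  refine hK.ncard_le_of_ncard_disjoint_le (fun S hS => hS.1) hA₀.left_mem_sdiff.1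
    (fun S hS => have ⟨u, hu, huc⟩ := (hadj S hS).1; subset_reachSet_of_adj hS.1 hu huc)
    hA₀.ncard_inter_lt ?_
  -- at most one tree other than `T₀` avoids `X T₀`
  have hsub : {S ∈ {T ∈ treesOf K C | s(p T, q T) = s(p T₀, q T₀)} | Disjoint S (X T₀)} ⊆
      {T₀} ∪ {S ∈ {T ∈ treesOf K C | s(p T, q T) = s(p T₀, q T₀)} |
        Disjoint S (X T₀) ∧ S ≠ T₀} := fun S hS => by
    by_cases h : S = T₀
    exacts [.inl h, .inr ⟨hS.1, hS.2, h⟩]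
  refine (ncard_le_ncard hsub).trans ((ncard_union_le _ _).trans ?_)
  rw [ncard_singleton, add_comm]
  refine Nat.add_le_add_right ((ncard_le_one_iff (toFinite _)).2 fun hS hS' => ?_) 1
  have hdisj : ∀ {S}, S ∈ treesOf K C → S ≠ T₀ → Disjoint S (X T₀) → Disjoint S (T₀ ∪ X T₀) :=
    fun hS hne hSX => (treesOf_pairwiseDisjoint hS hT₀ hne).union_right hSX
  exact eq_of_adj_adj_of_isFVS hT₀ hA₀.isFVS hS.1.1 hS'.1.1 (hdisj hS.1.1 hS.2.2 hS.2.1)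
    (hdisj hS'.1.1 hS'.2.2 hS'.2.1) hA₀.left_mem_sdiff hA₀.right_mem_sdiff (by simpa using he)
    (hadj _ hS.1).1 (hadj _ hS.1).2 (hadj _ hS'.1).1 (hadj _ hS'.1).2

end fibres

section counting

open Finset

variable [Finite V] {G : SimpleGraph V} {C : Set V} {z : ℕ} {K : G.Subgraph}
  {X : Set V → Set V} {a p b q : Set V → V}

lemma IsSpanningCert.ncard_le_mul_ncard (hK : IsSpanningCert C z K) : C.ncard ≤ z * C.ncard := by
  obtain h | ⟨c, hc⟩ := C.eq_empty_or_nonempty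
  · simp [h]
  have h1 : 0 < (C ∩ reachSet K.spanningCoe c).ncard :=
    (ncard_pos (toFinite _)).2 ⟨c, hc, mem_reachSet_self _ c⟩
  exact Nat.le_mul_of_pos_left _ (h1.trans_le (hK.ncard_inter_le c hc))

lemma IsSpanningCert.ncard_diag_le (hK : IsSpanningCert C z K)
    (hA : ∀ T ∈ treesOf K C, IsAnchor K C T (X T) (a T) (p T) (b T) (q T)) :
    {T ∈ treesOf K C | p T = q T}.ncard ≤ z * C.ncard := by
  classical
  rw [ncard_eq_toFinset_card _ (toFinite _), ncard_eq_toFinset_card C (toFinite _)]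
  refine card_le_mul_card_image_of_maps_to (f := p) (fun T hT => ?_) z fun c _ => ?_
  · simp only [Set.Finite.mem_toFinset, mem_ofPred_eq] at hT ⊢
    exact (hA T hT.1).left_mem_sdiff.1
  · rw [← ncard_coe_finset]
    refine (ncard_le_ncard fun T hT => ?_).trans (hK.ncard_diag_fibre_le hA c)
    simp only [coe_filter, Set.Finite.mem_toFinset, mem_ofPred_eq] at hT
    exact ⟨hT.1.1, hT.2, hT.1.2 ▸ hT.2⟩

lemma IsSpanningCert.two_mul_ncard_labels_add_le (hK : IsSpanningCert C z K)
    (hA : ∀ T ∈ treesOf K C, IsAnchor K C T (X T) (a T) (p T) (b T) (q T)) :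
    2 * ((fun T => s(p T, q T)) '' {T ∈ treesOf K C | p T ≠ q T}).ncard + C.ncard ≤
      z * C.ncard := by
  classical
  rw [ncard_eq_toFinset_card _ (toFinite _), ncard_eq_toFinset_card C (toFinite _)]
  refine two_mul_card_add_card_le_of_degree_lt (fun e he => ?_) (fun c hc => ?_)
  · simp only [Set.Finite.mem_toFinset, mem_image, mem_ofPred_eq] at he
    obtain ⟨T, ⟨hT, hpq⟩, rfl⟩ := he
    refine ⟨by simpa using hpq, fun x hx => ?_⟩
    rw [Set.Finite.mem_toFinset]
    rcases Sym2.mem_iff.1 hx with rfl | rfl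
    exacts [(hA T hT).left_mem_sdiff.1, (hA T hT).right_mem_sdiff.1]
  rw [Set.Finite.mem_toFinset] at hc
  set N := (toFinite (C ∩ reachSet K.spanningCoe c)).toFinset
  have hN : #N ≤ z := by
    rw [← ncard_eq_toFinset_card]
    exact hK.ncard_inter_le c hc
  have hcN : c ∈ N := by simp [N, hc]
  -- the labels at `c` join `c` to other vertices of `C` in its component
  have hsub : {e ∈ (toFinite ((fun T => s(p T, q T)) '' {T ∈ treesOf K C | p T ≠ q T})).toFinset |
      c ∈ e} ⊆ (N.erase c).image (fun x => s(c, x)) := by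
    intro e he
    simp only [mem_filter, Set.Finite.mem_toFinset, mem_image, mem_ofPred_eq] at he
    obtain ⟨⟨T, ⟨hT, hpq⟩, rfl⟩, hce⟩ := he
    have hA' := hA T hT
    rcases Sym2.mem_iff.1 hce with rfl | rfl
    · refine Finset.mem_image.2 ⟨q T, mem_erase.2 ⟨Ne.symm hpq, ?_⟩, rfl⟩
      simpa [N] using ⟨hA'.right_mem_sdiff.1, hA'.mem_reachSet hT⟩
    · refine Finset.mem_image.2 ⟨p T, mem_erase.2 ⟨hpq, ?_⟩, Sym2.eq_swap⟩
      simpa [N] using ⟨hA'.left_mem_sdiff.1, (hA'.mem_reachSet hT).symm⟩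
  calc _ ≤ #((N.erase c).image fun x => s(c, x)) := card_le_card hsub
    _ ≤ #(N.erase c) := card_image_le
    _ < #N := card_erase_lt_of_mem hcN
    _ ≤ z := hN

lemma IsSpanningCert.ncard_offDiag_le (hK : IsSpanningCert C z K)
    (hA : ∀ T ∈ treesOf K C, IsAnchor K C T (X T) (a T) (p T) (b T) (q T)) :
    {T ∈ treesOf K C | p T ≠ q T}.ncard ≤
      (z + 1) * ((fun T => s(p T, q T)) '' {T ∈ treesOf K C | p T ≠ q T}).ncard := by
  classical
  rw [ncard_eq_toFinset_card _ (toFinite _), ncard_eq_toFinset_card _ (toFinite _)]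
  refine card_le_mul_card_image_of_maps_to (f := fun T => s(p T, q T)) (fun T hT => ?_) (z + 1)
    fun e he => ?_
  · simp only [Set.Finite.mem_toFinset] at hT ⊢
    exact ⟨T, hT, rfl⟩
  simp only [Set.Finite.mem_toFinset, mem_image, mem_ofPred_eq] at he
  obtain ⟨T, ⟨-, hpq⟩, rfl⟩ := he
  rw [← ncard_coe_finset]
  refine (ncard_le_ncard fun S hS => ?_).trans
    (hK.ncard_offDiag_fibre_le hA s(p T, q T) (by simpa using hpq))
  simp only [coe_filter, Set.Finite.mem_toFinset, mem_ofPred_eq] at hS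
  exact ⟨hS.1.1, hS.2⟩

lemma IsSpanningCert.two_mul_ncard_treesOf_add_le (hK : IsSpanningCert C z K)
    (hpr : IsPruned K C) : 2 * (treesOf K C).ncard + C.ncard ≤ (z ^ 2 + 2 * z) * C.ncard := by
  have hCz := hK.ncard_le_mul_ncard
  obtain h | ⟨T₀, hT₀⟩ := (treesOf K C).eq_empty_or_nonempty
  · rw [h, ncard_empty]
    nlinarith
  have : Nonempty V := ⟨(nonempty_of_mem_treesOf hT₀).some⟩
  choose! X a p b q hA using fun T (hT : T ∈ treesOf K C) => hK.exists_isAnchor hT (hpr T hT)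
  have hsplit : (treesOf K C).ncard =
      {T ∈ treesOf K C | p T = q T}.ncard + {T ∈ treesOf K C | p T ≠ q T}.ncard :=
    (ncard_inter_add_ncard_sdiff_eq_ncard _ {T | p T = q T} (toFinite _)).symm
  have hD := hK.ncard_diag_le hA
  have hO := hK.ncard_offDiag_le hA
  have hE := hK.two_mul_ncard_labels_add_le hA
  nlinarith

end counting

section restriction

variable {G : SimpleGraph V} {C F F' : Set V}

lemma IsFVC.of_isCompClosed (hFVC : IsFVC G C F) (hF'F : F' ⊆ F)
    (hF' : IsCompClosed (graphRestrict G F) F') : IsFVC G C F' := by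
  obtain ⟨hCF, hacyc, hout⟩ := hFVC
  have hout' : ∀ {u w}, u ∈ F' → w ∉ C ∪ F' → G.Adj u w → w ∉ C ∪ F := by
    rintro u w hu hw huw (hwC | hwF)
    · exact hw (.inl hwC)
    · exact hw (.inr (hF' hu (Adj.reachable (G := graphRestrict G F) ⟨huw.symm, hwF, hF'F hu⟩)))
  refine ⟨hCF.mono_right hF'F, hacyc.anti (graphRestrict_mono le_rfl hF'F), ?_⟩
  intro u₁ u₂ w₁ w₂ hu₁ hu₂ hu₁₂ hw₁ hw₂ h₁ h₂
  exact hout u₁ u₂ w₁ w₂ (hF'F hu₁) (hF'F hu₂) (hu₁₂.mono (graphRestrict_mono le_rfl hF'F))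
    (hout' hu₁ hw₁ h₁) (hout' hu₂ hw₂ h₂) h₁ h₂

lemma spanningCoe_induce_eq_graphRestrict (L : SimpleGraph V) (s : Set V) :
    (L.induce s).spanningCoe = graphRestrict L s := by
  ext u v
  simp only [map_adj, comap_adj, Function.Embedding.subtype_apply, graphRestrict_adj]
  constructor
  · rintro ⟨a, b, h, rfl, rfl⟩
    exact ⟨h, a.2, b.2⟩
  · rintro ⟨h, hu, hv⟩
    exact ⟨⟨u, hu⟩, ⟨v, hv⟩, h, rfl, rfl⟩

lemma induce_graphRestrict_of_subset (h : F' ⊆ F) :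
    (graphRestrict G F).induce F' = G.induce F' := by
  ext u v
  simp only [comap_adj, Function.Embedding.subtype_apply, graphRestrict_adj, and_iff_left_iff_imp]
  exact fun _ => ⟨h u.2, h v.2⟩

lemma card_connectedComponent_induce_le [Finite V] {M L : SimpleGraph V} (hML : M ≤ L)
    (Y : Set V) :
    Nat.card (L.induce (⋃ y ∈ Y, reachSet L y)).ConnectedComponent ≤ (reachSet M '' Y).ncard := by
  set F' := ⋃ y ∈ Y, reachSet L y
  have hrep : ∀ κ : (L.induce F').ConnectedComponent, ∃ v : F', ∃ y ∈ Y,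
      (L.induce F').connectedComponentMk v = κ ∧ L.Reachable v y := by
    intro κ
    obtain ⟨v, rfl⟩ := κ.exists_rep
    obtain ⟨y, hy, hvy⟩ := mem_iUnion₂.1 v.2
    exact ⟨v, y, hy, rfl, hvy⟩
  choose v y hy hκ hvy using hrep
  rw [← Nat.card_coe_set_eq]
  refine Nat.card_le_card_of_injective (fun κ => ⟨reachSet M (y κ), y κ, hy κ, rfl⟩)
    fun κ κ' h => ?_
  have hyy' : M.Reachable (y κ) (y κ') := by
    have h' : reachSet M (y κ) = reachSet M (y κ') := congrArg Subtype.val h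
    rw [← mem_reachSet, ← h']
    exact mem_reachSet_self M (y κ)
  have hvv' := (isCompClosed_biUnion_reachSet L Y).graphRestrict_reachable (v κ).2
    ((hvy κ).trans ((hyy'.mono hML).trans (hvy κ').symm))
  rw [← spanningCoe_induce_eq_graphRestrict, reachable_spanningCoe_iff] at hvv'
  rw [← hκ κ, ← hκ κ']
  exact ConnectedComponent.sound hvv'

end restriction

lemma SimpleGraph.Subgraph.spanningCoe_le_graphRestrict {G : SimpleGraph V} {K : G.Subgraph}
    {S : Set V} (hK : K.verts ⊆ S) : K.spanningCoe ≤ graphRestrict G S :=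
  fun _ _ h => ⟨h.adj_sub, hK (K.edge_vert h), hK (K.edge_vert h.symm)⟩

lemma IsFVC.isZAntler [Finite V] {G : SimpleGraph V} {C F : Set V} {z : ℕ} {K : G.Subgraph}
    (hFVC : IsFVC G C F) (hK : IsSpanningCert C z K) (hKF : K.verts ⊆ C ∪ F) :
    IsZAntler G z C F :=
  ⟨⟨hFVC, hK.fvs_eq ▸ fvs_mono (Subgraph.spanningCoe_le_graphRestrict hKF)⟩, K, hKF,
    isSpanningCert_iff.1 hK⟩

theorem stmt9 [Fintype V] (G : SimpleGraph V) (z : ℕ) (C F : Set V)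
    (h : IsZAntler G z C F) :
    ∃ F' ⊆ F, IsZAntler G z C F' ∧
      (Nat.card ((G.induce F').ConnectedComponent) : ℚ) ≤
        (C.ncard : ℚ) / 2 * ((z : ℚ) ^ 2 + 2 * (z : ℚ) - 1) := by
  obtain ⟨⟨hFVC, -⟩, H, hHCF, hH⟩ := h
  obtain ⟨K, hKH, hK, hpr⟩ := (isSpanningCert_iff.2 hH).exists_isPruned
  have hKF : graphRestrict K.spanningCoe Cᶜ ≤ graphRestrict G F := by
    refine (graphRestrict_mono (Subgraph.spanningCoe_le_graphRestrict (hKH.trans hHCF))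
      le_rfl).trans ?_
    rw [graphRestrict_graphRestrict]
    exact graphRestrict_mono le_rfl fun x hx => hx.1.resolve_left hx.2
  set F' := ⋃ y ∈ K.verts \ C, reachSet (graphRestrict G F) y
  have hF'F : F' ⊆ F := iUnion₂_subset fun y hy =>
    reachSet_graphRestrict_subset (((hKH.trans hHCF) hy.1).resolve_left hy.2)
  have hKF' : K.verts ⊆ C ∪ F' := fun x hx =>
    or_iff_not_imp_left.2 fun hxC => mem_biUnion ⟨hx, hxC⟩ (mem_reachSet_self _ x)
  refine ⟨F', hF'F,
    (hFVC.of_isCompClosed hF'F (isCompClosed_biUnion_reachSet _ _)).isZAntler hK hKF', ?_⟩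
  have hcomp := card_connectedComponent_induce_le hKF (K.verts \ C)
  rw [induce_graphRestrict_of_subset hF'F] at hcomp
  have htrees := hK.two_mul_ncard_treesOf_add_le hpr
  have : (2 * Nat.card (G.induce F').ConnectedComponent + C.ncard : ℚ) ≤
      (z ^ 2 + 2 * z) * C.ncard := by
    exact_mod_cast (Nat.add_le_add_right (Nat.mul_le_mul_left 2 hcomp) _).trans htrees
  linarith
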